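/- Assume n = 2 and let A = (α_{ij}) ∈ M₂(ℂ) be a 2×2 complex matrix with Ā·A = I₂, where Ā denotes the entrywise complex conjugate of A. Then the Radford algebra H admits a *-structure (making H a Hopf *-algebra) uniquely determined by g* = g, x* = α₁₁x + α₁₂y, y* = α₂₁x + α₂₂y. -/

import Mathlib

open TensorProduct

noncomputable section

/-- The Gaussian (`q`-)binomial coefficient `C(m, k)_q`, defined by the `q`-Pascal
recurrence `C(m+1, k+1)_q = C(m, k)_q + q^(k+1) * C(m, k+1)_q`. -/
def qBinom (q : ℂ) : ℕ → ℕ → ℂ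
  | _, 0 => 1
  | 0, _ + 1 => 0
  | m + 1, k + 1 => qBinom q m k + q ^ (k + 1) * qBinom q m (k + 1)

/-- The Radford algebra: a Hopf algebra `H` over `ℂ` generated by elements
`g, x, y` subject to the relations `g^n = 1`, `x^n = y^n = 0`, `xg = ω g x`,
`g y = ω y g`, `x y = ω y x`, where `ω` is a root of unity of order `n > 1`,
with the comultiplication, counit and antipode determined by
`Δ(g) = g ⊗ g`, `ε(g) = 1`, `S(g) = g^(n-1)`,
`Δ(x) = x ⊗ g + 1 ⊗ x`, `ε(x) = 0`, `S(x) = -x g^(n-1)`,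
`Δ(y) = y ⊗ g + 1 ⊗ y`, `ε(y) = 0`, `S(y) = -y g^(n-1)`,
and with canonical `ℂ`-basis `{y^r x^s g^l | 0 ≤ r, s, l < n}`. -/
structure RadfordAlgebra (n : ℕ) (ω : ℂ) (H : Type*) [Ring H] [HopfAlgebra ℂ H] where
  g : H
  x : H
  y : H
  hn : 1 < n
  hω : IsPrimitiveRoot ω n
  g_pow : g ^ n = 1
  x_pow : x ^ n = 0
  y_pow : y ^ n = 0
  rel_xg : x * g = ω • (g * x)
  rel_gy : g * y = ω • (y * g)
  rel_xy : x * y = ω • (y * x)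
  comul_g : Coalgebra.comul (R := ℂ) g = g ⊗ₜ[ℂ] g
  counit_g : Coalgebra.counit (R := ℂ) g = 1
  antipode_g : HopfAlgebra.antipode (R := ℂ) g = g ^ (n - 1)
  comul_x : Coalgebra.comul (R := ℂ) x = x ⊗ₜ[ℂ] g + 1 ⊗ₜ[ℂ] x
  counit_x : Coalgebra.counit (R := ℂ) x = 0
  antipode_x : HopfAlgebra.antipode (R := ℂ) x = -(x * g ^ (n - 1))
  comul_y : Coalgebra.comul (R := ℂ) y = y ⊗ₜ[ℂ] g + 1 ⊗ₜ[ℂ] y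
  counit_y : Coalgebra.counit (R := ℂ) y = 0
  antipode_y : HopfAlgebra.antipode (R := ℂ) y = -(y * g ^ (n - 1))
  gen : Algebra.adjoin ℂ ({g, x, y} : Set H) = ⊤
  basis : Module.Basis (Fin n × Fin n × Fin n) ℂ H
  basis_eq : ∀ r s l : Fin n, basis (r, s, l) = y ^ (r : ℕ) * x ^ (s : ℕ) * g ^ (l : ℕ)

/-- A `*`-structure on a Hopf algebra `H` over `ℂ`: a conjugate-linear map
`* : H → H` such that `(h*)* = h`, `(hl)* = l* h*`,
`Δ(h*) = Σ (h₁)* ⊗ (h₂)*` and `S(S(h*)*) = h` for all `h, l ∈ H`.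
(The condition on `Δ` is expressed via the auxiliary additive map `starTensor`
on `H ⊗[ℂ] H` sending `a ⊗ b` to `a* ⊗ b*`, which is uniquely determined by
its two defining properties.) -/
structure HopfStarStructure (H : Type*) [Ring H] [HopfAlgebra ℂ H] where
  star : H → H
  star_add : ∀ a b : H, star (a + b) = star a + star b
  star_smul : ∀ (c : ℂ) (a : H), star (c • a) = (starRingEnd ℂ c) • star a
  star_star : ∀ a : H, star (star a) = a
  star_mul : ∀ a b : H, star (a * b) = star b * star a
  starTensor : H ⊗[ℂ] H → H ⊗[ℂ] H
  starTensor_add : ∀ u v : H ⊗[ℂ] H, starTensor (u + v) = starTensor u + starTensor v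
  starTensor_tmul : ∀ a b : H, starTensor (a ⊗ₜ[ℂ] b) = star a ⊗ₜ[ℂ] star b
  comul_star : ∀ a : H,
    Coalgebra.comul (R := ℂ) (star a) = starTensor (Coalgebra.comul (R := ℂ) a)
  antipode_star : ∀ a : H,
    HopfAlgebra.antipode (R := ℂ) (star (HopfAlgebra.antipode (R := ℂ) (star a))) = a

/-- Two `*`-structures `*'` and `*''` on a Hopf algebra `H` over `ℂ` are
equivalent if there is a Hopf algebra automorphism `ψ` of `H` such that
`ψ(h^{*'}) = ψ(h)^{*''}` for all `h ∈ H`. -/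
def HopfStarStructure.Equivalent {H : Type*} [Ring H] [HopfAlgebra ℂ H]
    (s₁ s₂ : HopfStarStructure H) : Prop :=
  ∃ ψ : H ≃ₐc[ℂ] H, ∀ h : H, ψ (s₁.star h) = s₂.star (ψ h)

/-!
Define `*` conjugate-linearly on the basis by `(y^r x^s g^l)* = g^l (x*)^s (y*)^r`. Each axiom
compares two semilinear maps that are both multiplicative or both anti-multiplicative, so it
only has to be checked on the generators `g, x, y`; anti-multiplicativity of `*` itself is
checked on products of a generator with a basis vector. On generators, `(h*)* = h` is exactly
`Ā A = I`, and `S(S(h*)*) = h` reduces to it because `S(x) = -x g` and `S(y) = -y g`.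
-/

namespace Module.Basis

variable {ι R S M N : Type*} [Fintype ι] [Semiring R] [Semiring S] [AddCommMonoid M] [Module R M]
  [AddCommMonoid N] [Module S N]

def semilinearConstr (b : Basis ι R M) (σ : R →+* S) (v : ι → N) : M →ₛₗ[σ] N where
  toFun m := ∑ i, σ (b.repr m i) • v i
  map_add' m m' := by simp [add_smul, Finset.sum_add_distrib]
  map_smul' c m := by simp [Finset.smul_sum, smul_smul]

@[simp]
theorem semilinearConstr_basis (b : Basis ι R M) (σ : R →+* S) (v : ι → N) (i : ι) :
    b.semilinearConstr σ v (b i) = v i := by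
  classical
  simp [semilinearConstr, Finsupp.single_apply]

end Module.Basis

section AdjoinExt

variable {K A B : Type*} [CommSemiring K] [Semiring A] [Algebra K A] [Semiring B] [Algebra K B]
  {σ : K →+* K} {s : Set A}

theorem LinearMap.eq_of_map_mul_of_adjoin_eq_top (hs : Algebra.adjoin K s = ⊤)
    {f₁ f₂ : A →ₛₗ[σ] B} (h₁ : ∀ a b, f₁ (a * b) = f₁ a * f₁ b)
    (h₂ : ∀ a b, f₂ (a * b) = f₂ a * f₂ b) (h_one : f₁ 1 = f₂ 1) (h : Set.EqOn f₁ f₂ s) :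
    f₁ = f₂ := by
  ext a
  have ha : a ∈ Algebra.adjoin K s := hs ▸ Algebra.mem_top
  induction ha using Algebra.adjoin_induction with
  | mem z hz => exact h hz
  | algebraMap r => simp [Algebra.algebraMap_eq_smul_one, h_one]
  | add a b _ _ ha hb => simp [ha, hb]
  | mul a b _ _ ha hb => rw [h₁, h₂, ha, hb]

theorem LinearMap.eq_of_map_mul_rev_of_adjoin_eq_top (hs : Algebra.adjoin K s = ⊤)
    {f₁ f₂ : A →ₛₗ[σ] B} (h₁ : ∀ a b, f₁ (a * b) = f₁ b * f₁ a)
    (h₂ : ∀ a b, f₂ (a * b) = f₂ b * f₂ a) (h_one : f₁ 1 = f₂ 1) (h : Set.EqOn f₁ f₂ s) :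
    f₁ = f₂ := by
  ext a
  have ha : a ∈ Algebra.adjoin K s := hs ▸ Algebra.mem_top
  induction ha using Algebra.adjoin_induction with
  | mem z hz => exact h hz
  | algebraMap r => simp [Algebra.algebraMap_eq_smul_one, h_one]
  | add a b _ _ ha hb => simp [ha, hb]
  | mul a b _ _ ha hb => rw [h₁, h₂, ha, hb]

theorem LinearMap.map_mul_rev_of_adjoin_eq_top (hs : Algebra.adjoin K s = ⊤) (f : A →ₛₗ[σ] B)
    (h_one : f 1 = 1) (h : ∀ z ∈ s, ∀ t, f (z * t) = f t * f z) (a b : A) :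
    f (a * b) = f b * f a := by
  have ha : a ∈ Algebra.adjoin K s := hs ▸ Algebra.mem_top
  induction ha using Algebra.adjoin_induction generalizing b with
  | mem z hz => exact h z hz b
  | algebraMap r => simp [Algebra.algebraMap_eq_smul_one, h_one]
  | add a a' _ _ ha ha' => simp [add_mul, ha, ha', mul_add]
  | mul a a' _ _ ha ha' => rw [mul_assoc, ha, ha', ha, mul_assoc]

theorem TensorProduct.map_mul_rev {C D : Type*} [Semiring C] [Algebra K C] [Semiring D]
    [Algebra K D] {f : A →ₛₗ[σ] B} {g : C →ₛₗ[σ] D} (hf : ∀ a b, f (a * b) = f b * f a)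
    (hg : ∀ a b, g (a * b) = g b * g a) (u v : A ⊗[K] C) :
    map f g (u * v) = map f g v * map f g u := by
  induction u with
  | zero => simp
  | add u u' hu hu' => simp [add_mul, hu, hu', mul_add]
  | tmul a c =>
    induction v with
    | zero => simp
    | add v v' hv hv' => simp [mul_add, hv, hv', add_mul]
    | tmul b d => simp [Algebra.TensorProduct.tmul_mul_tmul, hf, hg]

end AdjoinExt

namespace RadfordAlgebra

open Coalgebra HopfAlgebra

theorem omega_eq_neg_one {ω : ℂ} {H : Type*} [Ring H] [HopfAlgebra ℂ H]
    (R : RadfordAlgebra 2 ω H) : ω = -1 :=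
  R.hω.eq_neg_one_of_two_right

variable {ω : ℂ} {H : Type*} [Ring H] [HopfAlgebra ℂ H] (R : RadfordAlgebra 2 ω H)

@[simp] theorem g_mul_g : R.g * R.g = 1 := by simpa [sq] using R.g_pow
@[simp] theorem x_mul_x : R.x * R.x = 0 := by simpa [sq] using R.x_pow
@[simp] theorem y_mul_y : R.y * R.y = 0 := by simpa [sq] using R.y_pow
@[simp] theorem g_mul_x : R.g * R.x = -(R.x * R.g) := by simp [R.rel_xg, R.omega_eq_neg_one]
@[simp] theorem g_mul_y : R.g * R.y = -(R.y * R.g) := by simp [R.rel_gy, R.omega_eq_neg_one]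
@[simp] theorem x_mul_y : R.x * R.y = -(R.y * R.x) := by simp [R.rel_xy, R.omega_eq_neg_one]

@[simp] theorem x_mul_x_mul (t : H) : R.x * (R.x * t) = 0 := by
  rw [← mul_assoc, x_mul_x, zero_mul]
@[simp] theorem y_mul_y_mul (t : H) : R.y * (R.y * t) = 0 := by
  rw [← mul_assoc, y_mul_y, zero_mul]
@[simp] theorem g_mul_x_mul (t : H) : R.g * (R.x * t) = -(R.x * (R.g * t)) := by
  rw [← mul_assoc, g_mul_x, neg_mul, mul_assoc]
@[simp] theorem g_mul_y_mul (t : H) : R.g * (R.y * t) = -(R.y * (R.g * t)) := by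
  rw [← mul_assoc, g_mul_y, neg_mul, mul_assoc]
@[simp] theorem x_mul_y_mul (t : H) : R.x * (R.y * t) = -(R.y * (R.x * t)) := by
  rw [← mul_assoc, x_mul_y, neg_mul, mul_assoc]

@[simp] theorem antipode_g_eq : antipode ℂ R.g = R.g := by simp [R.antipode_g]
@[simp] theorem antipode_x_eq : antipode ℂ R.x = -(R.x * R.g) := by simp [R.antipode_x]
@[simp] theorem antipode_y_eq : antipode ℂ R.y = -(R.y * R.g) := by simp [R.antipode_y]

variable (A : Matrix (Fin 2) (Fin 2) ℂ)

def starOfMatrix : H →ₗ⋆[ℂ] H :=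
  R.basis.semilinearConstr (starRingEnd ℂ) fun i =>
    R.g ^ (i.2.2 : ℕ) * (A 0 0 • R.x + A 0 1 • R.y) ^ (i.2.1 : ℕ) *
      (A 1 0 • R.x + A 1 1 • R.y) ^ (i.1 : ℕ)

theorem starOfMatrix_monomial (r s l : Fin 2) :
    R.starOfMatrix A (R.y ^ (r : ℕ) * R.x ^ (s : ℕ) * R.g ^ (l : ℕ)) =
      R.g ^ (l : ℕ) * (A 0 0 • R.x + A 0 1 • R.y) ^ (s : ℕ) *
        (A 1 0 • R.x + A 1 1 • R.y) ^ (r : ℕ) := by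
  rw [← R.basis_eq, starOfMatrix, Module.Basis.semilinearConstr_basis]

@[simp] theorem starOfMatrix_one : R.starOfMatrix A 1 = 1 := by
  simpa using R.starOfMatrix_monomial A 0 0 0
@[simp] theorem starOfMatrix_g : R.starOfMatrix A R.g = R.g := by
  simpa using R.starOfMatrix_monomial A 0 0 1
@[simp] theorem starOfMatrix_x : R.starOfMatrix A R.x = A 0 0 • R.x + A 0 1 • R.y := by
  simpa using R.starOfMatrix_monomial A 0 1 0
@[simp] theorem starOfMatrix_y : R.starOfMatrix A R.y = A 1 0 • R.x + A 1 1 • R.y := by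
  simpa using R.starOfMatrix_monomial A 1 0 0

theorem starOfMatrix_mul (a b : H) :
    R.starOfMatrix A (a * b) = R.starOfMatrix A b * R.starOfMatrix A a := by
  refine (R.starOfMatrix A).map_mul_rev_of_adjoin_eq_top R.gen (R.starOfMatrix_one A) ?_ a b
  intro z hz t
  suffices (R.starOfMatrix A).comp (LinearMap.mulLeft ℂ z) =
      (LinearMap.mulRight ℂ (R.starOfMatrix A z)).comp (R.starOfMatrix A) from
    LinearMap.congr_fun this t
  refine R.basis.ext fun ⟨r, s, l⟩ => ?_
  have h_xg : R.starOfMatrix A (R.x * R.g) = R.g * (A 0 0 • R.x + A 0 1 • R.y) := by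
    simpa using R.starOfMatrix_monomial A 0 1 1
  have h_yg : R.starOfMatrix A (R.y * R.g) = R.g * (A 1 0 • R.x + A 1 1 • R.y) := by
    simpa using R.starOfMatrix_monomial A 1 0 1
  have h_yx : R.starOfMatrix A (R.y * R.x) =
      (A 0 0 • R.x + A 0 1 • R.y) * (A 1 0 • R.x + A 1 1 • R.y) := by
    simpa using R.starOfMatrix_monomial A 1 1 0
  have h_yxg : R.starOfMatrix A (R.y * (R.x * R.g)) =
      R.g * (A 0 0 • R.x + A 0 1 • R.y) * (A 1 0 • R.x + A 1 1 • R.y) := by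
    simpa [mul_assoc] using R.starOfMatrix_monomial A 1 1 1
  rcases hz with rfl | rfl | rfl <;> fin_cases r <;> fin_cases s <;> fin_cases l <;>
    simp [R.basis_eq, h_xg, h_yg, h_yx, h_yxg, mul_assoc, mul_add, add_mul] <;>
    module

theorem starOfMatrix_starOfMatrix (hA : A.map (starRingEnd ℂ) * A = 1) (h : H) :
    R.starOfMatrix A (R.starOfMatrix A h) = h := by
  have hA' i j := congr_fun (congr_fun hA i) j
  simp only [Matrix.mul_apply, Matrix.map_apply, Fin.sum_univ_two, Matrix.one_apply] at hA'
  suffices (R.starOfMatrix A).comp (R.starOfMatrix A) = LinearMap.id from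
    LinearMap.congr_fun this h
  refine LinearMap.eq_of_map_mul_of_adjoin_eq_top R.gen (fun a b => ?_) (fun _ _ => rfl)
    (by simp) ?_
  · simp [starOfMatrix_mul]
  · rintro z (rfl | rfl | rfl) <;> simp <;> match_scalars <;> simp [hA']

theorem comul_starOfMatrix (h : H) :
    comul (R := ℂ) (R.starOfMatrix A h) =
      TensorProduct.map (R.starOfMatrix A) (R.starOfMatrix A) (comul (R := ℂ) h) := by
  suffices (comul (R := ℂ)).comp (R.starOfMatrix A) =
      (TensorProduct.map (R.starOfMatrix A) (R.starOfMatrix A)).comp comul from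
    LinearMap.congr_fun this h
  refine LinearMap.eq_of_map_mul_rev_of_adjoin_eq_top R.gen (fun a b => ?_) (fun a b => ?_)
    (by simp [Algebra.TensorProduct.one_def]) ?_
  · simp [starOfMatrix_mul, Bialgebra.comul_mul]
  · simp only [LinearMap.comp_apply, Bialgebra.comul_mul]
    exact TensorProduct.map_mul_rev (R.starOfMatrix_mul A) (R.starOfMatrix_mul A) _ _
  · rintro z (rfl | rfl | rfl) <;>
      simp [R.comul_g, R.comul_x, R.comul_y, TensorProduct.tmul_add, TensorProduct.add_tmul,
        TensorProduct.smul_tmul', TensorProduct.tmul_smul] <;>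
      abel

theorem antipode_starOfMatrix_antipode_starOfMatrix_of_antipode_eq
    (hA : A.map (starRingEnd ℂ) * A = 1) {z : H} (hz : antipode ℂ z = -(z * R.g))
    (hz' : antipode ℂ (R.starOfMatrix A z) = -(R.starOfMatrix A z * R.g)) :
    antipode ℂ (R.starOfMatrix A (antipode ℂ (R.starOfMatrix A z))) = z := by
  rw [hz', map_neg, starOfMatrix_mul, starOfMatrix_starOfMatrix R A hA, starOfMatrix_g, map_neg,
    antipode_mul_antidistrib, hz, antipode_g_eq, neg_mul, neg_neg, mul_assoc, g_mul_g, mul_one]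

theorem antipode_starOfMatrix_antipode_starOfMatrix (hA : A.map (starRingEnd ℂ) * A = 1)
    (h : H) : antipode ℂ (R.starOfMatrix A (antipode ℂ (R.starOfMatrix A h))) = h := by
  suffices (antipode ℂ).comp ((R.starOfMatrix A).comp ((antipode ℂ).comp (R.starOfMatrix A))) =
      LinearMap.id from LinearMap.congr_fun this h
  refine LinearMap.eq_of_map_mul_of_adjoin_eq_top R.gen (fun a b => ?_) (fun _ _ => rfl)
    (by simp) ?_
  · simp [starOfMatrix_mul, antipode_mul_antidistrib]
  · rintro z (rfl | rfl | rfl)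
    · simp
    · exact R.antipode_starOfMatrix_antipode_starOfMatrix_of_antipode_eq A hA R.antipode_x_eq
        (by simp [add_mul, add_comm])
    · exact R.antipode_starOfMatrix_antipode_starOfMatrix_of_antipode_eq A hA R.antipode_y_eq
        (by simp [add_mul, add_comm])

end RadfordAlgebra

/-- For `n = 2` and `A ∈ M₂(ℂ)` with `Ā A = I₂`, the Radford
algebra `H` admits a `*`-structure with `g* = g`, `x* = a₁₁ x + a₁₂ y`,
`y* = a₂₁ x + a₂₂ y`. -/
theorem radford_star_structure_of_matrix
    {ω : ℂ} {H : Type*} [Ring H] [HopfAlgebra ℂ H]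
    (R : RadfordAlgebra 2 ω H) (A : Matrix (Fin 2) (Fin 2) ℂ)
    (hA : A.map (starRingEnd ℂ) * A = 1) :
    ∃ st : HopfStarStructure H,
      st.star R.g = R.g ∧
        st.star R.x = A 0 0 • R.x + A 0 1 • R.y ∧
        st.star R.y = A 1 0 • R.x + A 1 1 • R.y :=
  ⟨{ star := R.starOfMatrix A
     star_add := map_add _
     star_smul := map_smulₛₗ _
     star_star := R.starOfMatrix_starOfMatrix A hA
     star_mul := R.starOfMatrix_mul A
     starTensor := TensorProduct.map (R.starOfMatrix A) (R.starOfMatrix A)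
     starTensor_add := map_add _
     starTensor_tmul := TensorProduct.map_tmul _ _
     comul_star := R.comul_starOfMatrix A
     antipode_star := R.antipode_starOfMatrix_antipode_starOfMatrix A hA },
    R.starOfMatrix_g A, R.starOfMatrix_x A, R.starOfMatrix_y A⟩
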